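/- Let (ξ₁, ξ₂) be jointly normal with mean (πβ, π), covariance matrix Σ with entries σ₁², σ₁₂, σ₂² (Σ positive definite), and π > 0. Define β̂_U = τ̂(ξ₂)·(ξ₁ − (σ₁₂/σ₂²)ξ₂) + σ₁₂/σ₂², where τ̂(ξ₂) = (1/σ₂)·(1 − Φ(ξ₂/σ₂))/φ(ξ₂/σ₂). Then E[β̂_U] = β. -/

import Mathlib

/-! With `m = π / σ₂` and `Z` standard normal, `φ z / φ (m + z) = exp (m (m + z) - m² / 2)`, so
`E[τ̂(π + σ₂ Z)] = exp (-m² / 2) / σ₂ · ∫ exp (m u) (1 - Φ u) du`. By Tonelli on `{u ≤ t}` the last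
integral is `∫ φ t · exp (m t) / m dt = exp (m² / 2) / m`, hence `E[τ̂(ξ₂)] = 1 / π`.
The residual `ξ₁ - (σ₁₂/σ₂²) ξ₂ = π (β - σ₁₂/σ₂²) + √(σ₁² - σ₁₂²/σ₂²) Z₁` is independent of `ξ₂`, so
`E[β̂_U] = E[τ̂(ξ₂)] · π (β - σ₁₂/σ₂²) + σ₁₂/σ₂² = β`. -/

open MeasureTheory ProbabilityTheory Filter

/-- Standard normal density `φ`. -/
noncomputable def stdPDF (x : ℝ) : ℝ :=
  (Real.sqrt (2 * Real.pi))⁻¹ * Real.exp (-(x ^ 2) / 2)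

/-- Standard normal CDF `Φ`. -/
noncomputable def stdCDF (x : ℝ) : ℝ := ∫ t in Set.Iic x, stdPDF t

/-- Mills-ratio estimator `τ̂(x, σ²) = (1/σ)(1 − Φ(x/σ))/φ(x/σ)`. -/
noncomputable def millsTau (σ x : ℝ) : ℝ :=
  (1 / σ) * (1 - stdCDF (x / σ)) / stdPDF (x / σ)

open Set
open scoped ENNReal

lemma stdPDF_eq_gaussianPDFReal : stdPDF = gaussianPDFReal 0 1 := by
  ext x
  simp [stdPDF, gaussianPDFReal]

lemma stdPDF_pos (x : ℝ) : 0 < stdPDF x := by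
  rw [stdPDF_eq_gaussianPDFReal]
  exact gaussianPDFReal_pos _ _ _ one_ne_zero

lemma integrable_stdPDF : Integrable stdPDF := by
  rw [stdPDF_eq_gaussianPDFReal]
  exact integrable_gaussianPDFReal 0 1

lemma integral_stdPDF : ∫ x, stdPDF x = 1 := by
  rw [stdPDF_eq_gaussianPDFReal]
  exact integral_gaussianPDFReal_eq_one 0 one_ne_zero

@[fun_prop]
lemma measurable_stdPDF : Measurable stdPDF := by
  rw [stdPDF_eq_gaussianPDFReal]
  exact measurable_gaussianPDFReal 0 1

lemma integrable_gaussianReal_zero_one_iff {f : ℝ → ℝ} :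
    Integrable f (gaussianReal 0 1) ↔ Integrable (fun x => stdPDF x * f x) := by
  rw [gaussianReal_of_var_ne_zero 0 one_ne_zero,
    integrable_withDensity_iff_integrable_smul' (measurable_gaussianPDF 0 1)
      (ae_of_all _ fun _ => gaussianPDF_lt_top)]
  simp [toReal_gaussianPDF, stdPDF_eq_gaussianPDFReal]

lemma integral_gaussianReal_zero_one (f : ℝ → ℝ) :
    ∫ x, f x ∂gaussianReal 0 1 = ∫ x, stdPDF x * f x := by
  simp [integral_gaussianReal_eq_integral_smul one_ne_zero, stdPDF_eq_gaussianPDFReal]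

lemma integrable_stdPDF_mul_exp_mul (c : ℝ) :
    Integrable (fun t => stdPDF t * Real.exp (c * t)) :=
  integrable_gaussianReal_zero_one_iff.mp (integrable_exp_mul_gaussianReal c)

lemma integral_stdPDF_mul_exp_mul (c : ℝ) :
    ∫ t, stdPDF t * Real.exp (c * t) = Real.exp (c ^ 2 / 2) := by
  rw [← integral_gaussianReal_zero_one]
  simpa [mgf] using congrFun (mgf_fun_id_gaussianReal (μ := 0) (v := 1)) c

lemma stdCDF_mono : Monotone stdCDF := fun _ _ hab =>
  setIntegral_mono_set integrable_stdPDF.integrableOn (ae_of_all _ fun x => (stdPDF_pos x).le)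
    (Iic_subset_Iic.mpr hab).eventuallyLE

@[fun_prop]
lemma measurable_stdCDF : Measurable stdCDF := stdCDF_mono.measurable

lemma one_sub_stdCDF (x : ℝ) : 1 - stdCDF x = ∫ t in Ici x, stdPDF t := by
  have h := intervalIntegral.integral_Iic_add_Ioi (b := x) integrable_stdPDF.integrableOn
    integrable_stdPDF.integrableOn
  rw [integral_stdPDF] at h
  rw [integral_Ici_eq_integral_Ioi, stdCDF]
  linarith

lemma one_sub_stdCDF_nonneg (x : ℝ) : 0 ≤ 1 - stdCDF x := by
  rw [one_sub_stdCDF]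
  exact setIntegral_nonneg measurableSet_Ici fun t _ => (stdPDF_pos t).le

lemma stdPDF_eq_exp_mul_stdPDF_add (m z : ℝ) :
    stdPDF z = Real.exp (-(m ^ 2) / 2) * Real.exp (m * (m + z)) * stdPDF (m + z) := by
  simp only [stdPDF, ← Real.exp_add, mul_left_comm _ (Real.sqrt _)⁻¹]
  ring_nf

lemma lintegral_exp_mul_one_sub_stdCDF {m : ℝ} (hm : 0 < m) :
    ∫⁻ u, ENNReal.ofReal (Real.exp (m * u) * (1 - stdCDF u))
      = ENNReal.ofReal (Real.exp (m ^ 2 / 2) / m) := by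
  let F : ℝ → ℝ → ℝ≥0∞ := fun u t =>
    {q : ℝ × ℝ | q.1 ≤ q.2}.indicator
      (fun q => ENNReal.ofReal (Real.exp (m * q.1) * stdPDF q.2)) (u, t)
  have hF : Measurable (Function.uncurry F) :=
    (Measurable.ennreal_ofReal (by fun_prop)).indicator
      (measurableSet_le measurable_fst measurable_snd)
  have over_t (u : ℝ) : ∫⁻ t, F u t = ENNReal.ofReal (Real.exp (m * u) * (1 - stdCDF u)) := by
    have : F u = (Ici u).indicator fun t => ENNReal.ofReal (Real.exp (m * u) * stdPDF t) := by
      ext t; simp [F, indicator_apply]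
    rw [this, lintegral_indicator measurableSet_Ici,
      ← ofReal_integral_eq_lintegral_ofReal (integrable_stdPDF.integrableOn.const_mul _)
        (ae_of_all _ fun t => by positivity [stdPDF_pos t]),
      integral_const_mul, one_sub_stdCDF]
  have over_u (t : ℝ) : ∫⁻ u, F u t = ENNReal.ofReal (stdPDF t * Real.exp (m * t) / m) := by
    have : (F · t) = (Iic t).indicator fun u => ENNReal.ofReal (Real.exp (m * u) * stdPDF t) := by
      ext u; simp [F, indicator_apply]
    rw [this, lintegral_indicator measurableSet_Iic,
      ← ofReal_integral_eq_lintegral_ofReal ((integrableOn_exp_mul_Iic hm t).mul_const _)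
        (ae_of_all _ fun u => by positivity [stdPDF_pos t]),
      integral_mul_const, integral_exp_mul_Iic hm]
    ring_nf
  calc ∫⁻ u, ENNReal.ofReal (Real.exp (m * u) * (1 - stdCDF u))
      = ∫⁻ u, ∫⁻ t, F u t := by simp_rw [over_t]
    _ = ∫⁻ t, ∫⁻ u, F u t := lintegral_lintegral_swap hF.aemeasurable
    _ = ∫⁻ t, ENNReal.ofReal (stdPDF t * Real.exp (m * t) / m) := by simp_rw [over_u]
    _ = ENNReal.ofReal (Real.exp (m ^ 2 / 2) / m) := by
      rw [← ofReal_integral_eq_lintegral_ofReal ((integrable_stdPDF_mul_exp_mul m).div_const m)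
          (ae_of_all _ fun t => by positivity [stdPDF_pos t]),
        integral_div, integral_stdPDF_mul_exp_mul]

lemma integrable_exp_mul_one_sub_stdCDF {m : ℝ} (hm : 0 < m) :
    Integrable fun u => Real.exp (m * u) * (1 - stdCDF u) := by
  refine ⟨by fun_prop, ?_⟩
  rw [hasFiniteIntegral_iff_ofReal
      (ae_of_all _ fun u => by positivity [one_sub_stdCDF_nonneg u]),
    lintegral_exp_mul_one_sub_stdCDF hm]
  exact ENNReal.ofReal_lt_top

lemma integral_exp_mul_one_sub_stdCDF {m : ℝ} (hm : 0 < m) :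
    ∫ u, Real.exp (m * u) * (1 - stdCDF u) = Real.exp (m ^ 2 / 2) / m := by
  rw [integral_eq_lintegral_of_nonneg_ae
      (ae_of_all _ fun u => by positivity [one_sub_stdCDF_nonneg u]) (by fun_prop),
    lintegral_exp_mul_one_sub_stdCDF hm, ENNReal.toReal_ofReal (by positivity)]

lemma stdPDF_mul_millsTau {σ : ℝ} (hσ : σ ≠ 0) (p z : ℝ) :
    stdPDF z * millsTau σ (p + σ * z) = Real.exp (-((p / σ) ^ 2) / 2) / σ *
      (Real.exp (p / σ * (p / σ + z)) * (1 - stdCDF (p / σ + z))) := by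
  rw [millsTau, stdPDF_eq_exp_mul_stdPDF_add (p / σ) z, show (p + σ * z) / σ = p / σ + z by
    field_simp]
  have hpos := stdPDF_pos (p / σ + z)
  generalize stdPDF (p / σ + z) = A at hpos ⊢
  field_simp

@[fun_prop]
lemma measurable_millsTau (σ : ℝ) : Measurable (millsTau σ) := by
  unfold millsTau
  fun_prop

lemma integrable_millsTau_const_add_mul {p σ : ℝ} (hp : 0 < p) (hσ : 0 < σ) :
    Integrable (fun z => millsTau σ (p + σ * z)) (gaussianReal 0 1) := by
  rw [integrable_gaussianReal_zero_one_iff]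
  simp_rw [stdPDF_mul_millsTau hσ.ne']
  exact ((integrable_exp_mul_one_sub_stdCDF (div_pos hp hσ)).comp_add_left (p / σ)).const_mul _

lemma integral_millsTau_const_add_mul {p σ : ℝ} (hp : 0 < p) (hσ : 0 < σ) :
    ∫ z, millsTau σ (p + σ * z) ∂gaussianReal 0 1 = 1 / p := by
  rw [integral_gaussianReal_zero_one]
  simp_rw [stdPDF_mul_millsTau hσ.ne']
  rw [integral_const_mul,
    integral_add_left_eq_self (fun u => Real.exp (p / σ * u) * (1 - stdCDF u)),
    integral_exp_mul_one_sub_stdCDF (div_pos hp hσ), div_mul_div_comm, ← Real.exp_add]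
  field_simp
  simp

section MillsRatioEstimator

variable {Ω : Type*} [MeasurableSpace Ω] {P : Measure Ω} {Z Y : Ω → ℝ} {p σ : ℝ}

lemma integrable_millsTau_comp (hZ : HasLaw Z (gaussianReal 0 1) P) (hp : 0 < p) (hσ : 0 < σ) :
    Integrable (fun ω => millsTau σ (p + σ * Z ω)) P :=
  (hZ.map_eq ▸ integrable_millsTau_const_add_mul hp hσ).comp_aemeasurable hZ.aemeasurable

lemma integral_millsTau_comp (hZ : HasLaw Z (gaussianReal 0 1) P) (hp : 0 < p) (hσ : 0 < σ) :
    ∫ ω, millsTau σ (p + σ * Z ω) ∂P = 1 / p := by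
  rw [← integral_millsTau_const_add_mul hp hσ]
  exact hZ.integral_comp (integrable_millsTau_const_add_mul hp hσ).1

lemma integrable_millsTau_comp_mul (hZ : HasLaw Z (gaussianReal 0 1) P) (hY : Integrable Y P)
    (hZY : IndepFun Z Y P) (hp : 0 < p) (hσ : 0 < σ) :
    Integrable (fun ω => millsTau σ (p + σ * Z ω) * Y ω) P :=
  (hZY.comp (φ := fun z => millsTau σ (p + σ * z)) (by fun_prop) measurable_id).integrable_mul
    (integrable_millsTau_comp hZ hp hσ) hY

lemma integral_millsTau_comp_mul (hZ : HasLaw Z (gaussianReal 0 1) P) (hY : Integrable Y P)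
    (hZY : IndepFun Z Y P) (hp : 0 < p) (hσ : 0 < σ) :
    ∫ ω, millsTau σ (p + σ * Z ω) * Y ω ∂P = (∫ ω, Y ω ∂P) / p := by
  have hτY : IndepFun (fun ω => millsTau σ (p + σ * Z ω)) Y P :=
    hZY.comp (φ := fun z => millsTau σ (p + σ * z)) (by fun_prop) measurable_id
  rw [hτY.integral_fun_mul_eq_mul_integral (integrable_millsTau_comp hZ hp hσ).1 hY.1,
    integral_millsTau_comp hZ hp hσ, one_div_mul_eq_div]

end MillsRatioEstimator

theorem stmt2_general {Ω : Type*} [MeasurableSpace Ω] (P : Measure Ω) [IsProbabilityMeasure P]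
    (Z₁ Z₂ : Ω → ℝ) (hm₁ : Measurable Z₁) (hm₂ : Measurable Z₂)
    (hind : IndepFun Z₁ Z₂ P)
    (hZ₁ : P.map Z₁ = gaussianReal 0 1) (hZ₂ : P.map Z₂ = gaussianReal 0 1)
    (β π σ₁ σ₁₂ σ₂ : ℝ) (hπ : 0 < π) (hσ₂ : 0 < σ₂)
    (ξ₁ ξ₂ : Ω → ℝ)
    (hξ₂ : ξ₂ = fun ω => π + σ₂ * Z₂ ω)
    (hξ₁ : ξ₁ = fun ω => π * β + (σ₁₂ / σ₂) * Z₂ ω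
        + Real.sqrt (σ₁ ^ 2 - σ₁₂ ^ 2 / σ₂ ^ 2) * Z₁ ω) :
    ∫ ω, (millsTau σ₂ (ξ₂ ω) * (ξ₁ ω - (σ₁₂ / σ₂ ^ 2) * ξ₂ ω) + σ₁₂ / σ₂ ^ 2) ∂P
      = β := by
  subst hξ₁ hξ₂
  set c := σ₁₂ / σ₂ ^ 2
  set s := Real.sqrt (σ₁ ^ 2 - σ₁₂ ^ 2 / σ₂ ^ 2)
  have hlaw₂ : HasLaw Z₂ (gaussianReal 0 1) P := ⟨hm₂.aemeasurable, hZ₂⟩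
  have hY :
      HasLaw (fun ω => π * (β - c) + s * Z₁ ω) (gaussianReal (s * 0 + π * (β - c)) _) P :=
    gaussianReal_const_add (gaussianReal_const_mul ⟨hm₁.aemeasurable, hZ₁⟩ s) _
  have hY_int : Integrable (fun ω => π * (β - c) + s * Z₁ ω) P :=
    (hY.map_eq ▸ (memLp_id_gaussianReal 1).integrable le_rfl).comp_aemeasurable hY.aemeasurable
  have hZ₂Y : IndepFun Z₂ (fun ω => π * (β - c) + s * Z₁ ω) P :=
    hind.symm.comp (ψ := fun z => π * (β - c) + s * z) measurable_id (by fun_prop)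
  have hpoint (ω : Ω) : millsTau σ₂ (π + σ₂ * Z₂ ω) *
      (π * β + σ₁₂ / σ₂ * Z₂ ω + s * Z₁ ω - c * (π + σ₂ * Z₂ ω)) + c
        = millsTau σ₂ (π + σ₂ * Z₂ ω) * (π * (β - c) + s * Z₁ ω) + c := by
    simp only [c]
    field_simp
    ring
  simp_rw [hpoint]
  rw [integral_add (integrable_millsTau_comp_mul hlaw₂ hY_int hZ₂Y hπ hσ₂) (integrable_const c),
    integral_millsTau_comp_mul hlaw₂ hY_int hZ₂Y hπ hσ₂, hY.integral_eq, integral_id_gaussianReal,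
    integral_const, probReal_univ, one_smul, mul_zero, zero_add]
  field_simp
  ring

/-- Unbiasedness of β̂_U in the bivariate normal model with π > 0. -/
theorem stmt2 {Ω : Type*} [MeasurableSpace Ω] (P : Measure Ω) [IsProbabilityMeasure P]
    (Z₁ Z₂ : Ω → ℝ) (hm₁ : Measurable Z₁) (hm₂ : Measurable Z₂)
    (hind : IndepFun Z₁ Z₂ P)
    (hZ₁ : P.map Z₁ = gaussianReal 0 1) (hZ₂ : P.map Z₂ = gaussianReal 0 1)
    (β π σ₁ σ₁₂ σ₂ : ℝ) (hπ : 0 < π) (hσ₂ : 0 < σ₂)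
    (hpd : σ₁₂ ^ 2 < σ₁ ^ 2 * σ₂ ^ 2)
    (ξ₁ ξ₂ : Ω → ℝ)
    (hξ₂ : ξ₂ = fun ω => π + σ₂ * Z₂ ω)
    (hξ₁ : ξ₁ = fun ω => π * β + (σ₁₂ / σ₂) * Z₂ ω
        + Real.sqrt (σ₁ ^ 2 - σ₁₂ ^ 2 / σ₂ ^ 2) * Z₁ ω) :
    ∫ ω, (millsTau σ₂ (ξ₂ ω) * (ξ₁ ω - (σ₁₂ / σ₂ ^ 2) * ξ₂ ω) + σ₁₂ / σ₂ ^ 2) ∂P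
      = β :=
  stmt2_general P Z₁ Z₂ hm₁ hm₂ hind hZ₁ hZ₂ β π σ₁ σ₁₂ σ₂ hπ hσ₂ ξ₁ ξ₂ hξ₂ hξ₁
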